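/- Uhlmann's theorem (isometry form): for a positive semidefinite ρ_A with purification ρ_{AB} and σ_A with purification σ_{AC}, the fidelity satisfies F(ρ_A, σ_A) = max over partial isometries V : B → C of F((1⊗V) ρ_{AB} (1⊗V)†, σ_{AC}). -/

import Mathlib

open Matrix
open scoped ComplexOrder Classical

/-- The square root of a positive semidefinite matrix (removed from Mathlib; old definition). -/
noncomputable def Matrix.PosSemidef.sqrt {n 𝕜 : Type*} [Fintype n] [RCLike 𝕜] [DecidableEq n]
    {A : Matrix n n 𝕜} (hA : A.PosSemidef) : Matrix n n 𝕜 :=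
  hA.1.eigenvectorUnitary.1 * diagonal ((↑) ∘ (√·) ∘ hA.1.eigenvalues) *
    (star hA.1.eigenvectorUnitary : Matrix n n 𝕜)

/-- The trace norm `‖X‖₁ = Tr √(XᴴX)` of a complex matrix. -/
noncomputable def traceNorm {n : Type*} [Fintype n] [DecidableEq n] (X : Matrix n n ℂ) : ℝ :=
  ((Matrix.posSemidef_conjTranspose_mul_self X).sqrt.trace).re

/-- The positive semidefinite square root, extended by `0` off the PSD cone. -/
noncomputable def msqrt {n : Type*} [Fintype n] [DecidableEq n] (X : Matrix n n ℂ) : Matrix n n ℂ :=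
  if h : X.PosSemidef then h.sqrt else 0

/-- The fidelity `F(ρ,σ) = ‖√ρ √σ‖₁²`. -/
noncomputable def fidelity {n : Type*} [Fintype n] [DecidableEq n] (ρ σ : Matrix n n ℂ) : ℝ :=
  (traceNorm (msqrt ρ * msqrt σ)) ^ 2

open scoped Kronecker

/-- A rank-one positive semidefinite (pure) operator. -/
def IsPure {n : Type*} (M : Matrix n n ℂ) : Prop :=
  ∃ v : n → ℂ, M = Matrix.vecMulVec v (star v)

/-- Partial trace over the second tensor factor. -/
noncomputable def ptraceR {A B : Type*} [Fintype B] (M : Matrix (A × B) (A × B) ℂ) :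
    Matrix A A ℂ :=
  fun a a' => ∑ b, M (a, b) (a', b)

/-- A partial isometry, as a matrix. -/
def IsPartialIsometry {m n : Type*} [Fintype m] [Fintype n] (V : Matrix m n ℂ) : Prop :=
  V * Vᴴ * V = V

/-!
Write the purifications as `vec X` and `vec Y`, so that the marginals are `Xᵀ Xᵀᴴ` and `Yᵀ Yᵀᴴ`,
and put `Z = Y Xᴴ`. The fidelity of the marginals is `‖Z‖₁²` and the fidelity of
`(1 ⊗ V) ρ (1 ⊗ V)†` with `σ` is `|tr (Z Vᴴ)|²`, so the theorem is the variational formula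
`‖Z‖₁ = max |tr (Z K)|` over partial isometries `K` (which also gives the invariance of `‖·‖₁`
under `ᴴ` and `ᵀ` needed for the first identification). The maximum is attained at `K = Wᴴ`,
where `Z = W |Z|` is the polar decomposition with `W = Z |Z|⁺` (`|Z|⁺` the pseudo-inverse).
For the bound, write `tr (Z K) = tr ((Kᴴ S)ᴴ (W S))` with `S = |Z|^{1/2}` and use
`2 Re tr (Pᴴ R) ≤ tr (Pᴴ P) + tr (Rᴴ R)`: partial isometries do not increase `tr (Sᴴ S) = tr |Z|`.
-/

open scoped MatrixOrder

lemma Matrix.PosSemidef.sqrt_eq_cfcSqrt {n : Type*} [Fintype n] [DecidableEq n]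
    {A : Matrix n n ℂ} (hA : A.PosSemidef) : hA.sqrt = CFC.sqrt A := by
  rw [CFC.sqrt_eq_cfc, cfc_nnreal_eq_real _ A, hA.1.cfc_eq]
  simp only [IsHermitian.cfc, Matrix.PosSemidef.sqrt, Unitary.conjStarAlgAut_apply]
  congr 3
  funext i
  simp [Real.coe_sqrt, Real.coe_toNNReal', max_eq_left (hA.eigenvalues_nonneg i)]

lemma msqrt_eq_cfcSqrt {n : Type*} [Fintype n] [DecidableEq n] {A : Matrix n n ℂ}
    (hA : A.PosSemidef) : msqrt A = CFC.sqrt A := by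
  rw [msqrt, dif_pos hA, hA.sqrt_eq_cfcSqrt]

namespace IsPartialIsometry

variable {m n p : Type*} [Fintype m] [Fintype n] [Fintype p] {K : Matrix m n ℂ}

lemma conjTranspose (hK : IsPartialIsometry K) : IsPartialIsometry Kᴴ := by
  unfold IsPartialIsometry at *
  conv_rhs => rw [← hK]
  simp only [conjTranspose_mul, conjTranspose_conjTranspose, Matrix.mul_assoc]

lemma transpose (hK : IsPartialIsometry K) : IsPartialIsometry Kᵀ := by
  unfold IsPartialIsometry at *
  conv_rhs => rw [← hK]
  rw [conjTranspose_transpose_eq_transpose_conjTranspose, ← transpose_mul, ← transpose_mul,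
    Matrix.mul_assoc]

lemma smul (hK : IsPartialIsometry K) {c : ℂ} (hc : ‖c‖ = 1) : IsPartialIsometry (c • K) := by
  unfold IsPartialIsometry at *
  have hcc : c * star c = 1 := by
    rw [Complex.star_def, Complex.mul_conj', hc]; norm_num
  simp only [conjTranspose_smul, Matrix.smul_mul, Matrix.mul_smul, smul_smul, hK]
  congr 1
  linear_combination c * hcc

lemma re_trace_conjTranspose_mul_le [DecidableEq n] (hK : IsPartialIsometry K)
    (S : Matrix n p ℂ) : ((K * S)ᴴ * (K * S)).trace.re ≤ (Sᴴ * S).trace.re := by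
  have hidem : Kᴴ * K * (Kᴴ * K) = Kᴴ * K := by
    rw [Matrix.mul_assoc Kᴴ, ← Matrix.mul_assoc K, hK]
  have hproj : (1 - Kᴴ * K)ᴴ * (1 - Kᴴ * K) = 1 - Kᴴ * K := by
    rw [conjTranspose_sub, conjTranspose_one, conjTranspose_mul, conjTranspose_conjTranspose,
      Matrix.sub_mul, Matrix.mul_sub, Matrix.mul_sub, hidem]
    simp
  have h := (posSemidef_conjTranspose_mul_self ((1 - Kᴴ * K) * S)).trace_nonneg
  rw [conjTranspose_mul, Matrix.mul_assoc, ← Matrix.mul_assoc _ _ S, hproj, Matrix.sub_mul,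
    Matrix.one_mul, Matrix.mul_sub, trace_sub] at h
  have hKS : (K * S)ᴴ * (K * S) = Sᴴ * (Kᴴ * K * S) := by
    simp only [conjTranspose_mul, Matrix.mul_assoc]
  rw [hKS]
  have := (Complex.nonneg_iff.mp h).1
  rw [Complex.sub_re] at this
  linarith

end IsPartialIsometry

namespace Matrix

variable {m n p : Type*} [Fintype m] [Fintype n] [Fintype p]

lemma two_mul_re_trace_conjTranspose_mul_le (Y Z : Matrix m n ℂ) :
    2 * (Yᴴ * Z).trace.re ≤ (Yᴴ * Y).trace.re + (Zᴴ * Z).trace.re := by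
  have h := (posSemidef_conjTranspose_mul_self (Y - Z)).trace_nonneg
  have hZY : (Zᴴ * Y).trace = star (Yᴴ * Z).trace := by
    rw [← trace_conjTranspose, conjTranspose_mul, conjTranspose_conjTranspose]
  rw [conjTranspose_sub, Matrix.sub_mul, Matrix.mul_sub, Matrix.mul_sub] at h
  simp only [trace_sub, hZY] at h
  have := (Complex.nonneg_iff.mp h).1
  simp only [Complex.sub_re, Complex.star_def, Complex.conj_re] at this
  linarith

variable [DecidableEq n]

lemma cfc_mul_cfc (f g : ℝ → ℝ) (A : Matrix n n ℂ) :
    cfc f A * cfc g A = cfc (fun x => f x * g x) A :=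
  (cfc_mul f g A (A.finite_real_spectrum.continuousOn f)
    (A.finite_real_spectrum.continuousOn g)).symm

section PseudoInverse

variable {Q : Matrix n n ℂ}

lemma mul_cfc_inv_mul_self (hQ : IsSelfAdjoint Q) : Q * cfc (·⁻¹ : ℝ → ℝ) Q * Q = Q := by
  have hid := cfc_id' ℝ Q
  calc Q * cfc (·⁻¹ : ℝ → ℝ) Q * Q
      = cfc (fun x : ℝ => x) Q * cfc (·⁻¹ : ℝ → ℝ) Q * cfc (fun x : ℝ => x) Q := by rw [hid]
    _ = Q := by rw [cfc_mul_cfc, cfc_mul_cfc]; simp only [mul_inv_mul_cancel]; exact hid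

lemma cfc_inv_mul_self_mul_cfc_inv (hQ : IsSelfAdjoint Q) :
    cfc (·⁻¹ : ℝ → ℝ) Q * Q * cfc (·⁻¹ : ℝ → ℝ) Q = cfc (·⁻¹ : ℝ → ℝ) Q := by
  calc cfc (·⁻¹ : ℝ → ℝ) Q * Q * cfc (·⁻¹ : ℝ → ℝ) Q
      = cfc (·⁻¹ : ℝ → ℝ) Q * cfc (fun x : ℝ => x) Q * cfc (·⁻¹ : ℝ → ℝ) Q := by
        rw [cfc_id' ℝ Q]
    _ = _ := by
      rw [cfc_mul_cfc, cfc_mul_cfc]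
      congr 1 with x
      simpa using mul_inv_mul_cancel x⁻¹

lemma commute_cfc_inv (hQ : IsSelfAdjoint Q) : Commute (cfc (·⁻¹ : ℝ → ℝ) Q) Q := by
  simpa only [cfc_id' ℝ Q] using cfc_commute_cfc (·⁻¹ : ℝ → ℝ) (fun x : ℝ => x) Q

end PseudoInverse

lemma conjTranspose_cfcSqrt (A : Matrix n n ℂ) : (CFC.sqrt A)ᴴ = CFC.sqrt A :=
  (CFC.sqrt_nonneg A).isSelfAdjoint

theorem exists_isPartialIsometry_mul_cfcSqrt (X : Matrix m n ℂ) :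
    ∃ W : Matrix m n ℂ, IsPartialIsometry W ∧
      W * CFC.sqrt (Xᴴ * X) = X ∧ Wᴴ * X = CFC.sqrt (Xᴴ * X) := by
  set Q := CFC.sqrt (Xᴴ * X)
  have hQ : IsSelfAdjoint Q := (CFC.sqrt_nonneg _).isSelfAdjoint
  have hQQ : Q * Q = Xᴴ * X :=
    CFC.sqrt_mul_sqrt_self _ (posSemidef_conjTranspose_mul_self X).nonneg
  set R := cfc (·⁻¹ : ℝ → ℝ) Q
  have hR : Rᴴ = R := cfc_predicate (·⁻¹ : ℝ → ℝ) Q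
  have hQRQ : Q * R * Q = Q := mul_cfc_inv_mul_self hQ
  have hRQQ : R * (Q * Q) = Q := by rw [← Matrix.mul_assoc, (commute_cfc_inv hQ).eq, hQRQ]
  refine ⟨X * R, ?_, ?_, ?_⟩
  · have hRQR : R * Q * R = R := cfc_inv_mul_self_mul_cfc_inv hQ
    calc X * R * (X * R)ᴴ * (X * R) = X * (R * (R * (Xᴴ * X)) * R) := by
          simp only [conjTranspose_mul, hR, Matrix.mul_assoc]
      _ = X * R := by rw [← hQQ, hRQQ, hRQR]
  · -- `X (R Q - 1) = 0` because its Gram matrix `(R Q - 1)ᴴ Q Q (R Q - 1)` vanishes.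
    have hQP : Q * (R * Q - 1) = 0 := by
      rw [Matrix.mul_sub, Matrix.mul_one, ← Matrix.mul_assoc, hQRQ, sub_self]
    have hXP : X * (R * Q - 1) = 0 := by
      rw [← conjTranspose_mul_self_eq_zero, conjTranspose_mul, Matrix.mul_assoc,
        ← Matrix.mul_assoc Xᴴ, ← hQQ, Matrix.mul_assoc, hQP, Matrix.mul_zero, Matrix.mul_zero]
    rw [Matrix.mul_sub, Matrix.mul_one, sub_eq_zero, ← Matrix.mul_assoc] at hXP
    exact hXP
  · rw [conjTranspose_mul, hR, Matrix.mul_assoc, ← hQQ, hRQQ]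

noncomputable def traceNormRect (X : Matrix m n ℂ) : ℝ :=
  (CFC.sqrt (Xᴴ * X)).trace.re

lemma traceNorm_eq_traceNormRect (X : Matrix n n ℂ) : traceNorm X = traceNormRect X := by
  rw [traceNorm, traceNormRect, PosSemidef.sqrt_eq_cfcSqrt]

lemma ofReal_traceNormRect (X : Matrix m n ℂ) :
    (traceNormRect X : ℂ) = (CFC.sqrt (Xᴴ * X)).trace :=
  (Complex.eq_re_of_ofReal_le (CFC.sqrt_nonneg (Xᴴ * X)).posSemidef.trace_nonneg).symm

lemma traceNormRect_mul_eq_of_conjTranspose_mul_self_eq {q : Type*} [Fintype q]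
    {S : Matrix p m ℂ} {T : Matrix q m ℂ} (h : Sᴴ * S = Tᴴ * T) (Y : Matrix m n ℂ) :
    traceNormRect (S * Y) = traceNormRect (T * Y) := by
  have hSY : (S * Y)ᴴ * (S * Y) = Yᴴ * (Sᴴ * S) * Y := by
    simp only [conjTranspose_mul, Matrix.mul_assoc]
  have hTY : (T * Y)ᴴ * (T * Y) = Yᴴ * (Tᴴ * T) * Y := by
    simp only [conjTranspose_mul, Matrix.mul_assoc]
  rw [traceNormRect, traceNormRect, hSY, hTY, h]

lemma exists_isPartialIsometry_trace_mul_eq_traceNormRect (X : Matrix m n ℂ) :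
    ∃ K : Matrix n m ℂ, IsPartialIsometry K ∧ (X * K).trace = traceNormRect X := by
  obtain ⟨W, hW, -, hWX⟩ := exists_isPartialIsometry_mul_cfcSqrt X
  refine ⟨Wᴴ, hW.conjTranspose, ?_⟩
  rw [trace_mul_comm, hWX, ofReal_traceNormRect]

lemma re_trace_mul_le_traceNormRect (X : Matrix m n ℂ) {K : Matrix n m ℂ}
    (hK : IsPartialIsometry K) : (X * K).trace.re ≤ traceNormRect X := by
  obtain ⟨W, hW, hWQ, -⟩ := exists_isPartialIsometry_mul_cfcSqrt X
  set S := CFC.sqrt (CFC.sqrt (Xᴴ * X))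
  have hS : Sᴴ = S := conjTranspose_cfcSqrt _
  have hSS : Sᴴ * S = CFC.sqrt (Xᴴ * X) := by
    rw [hS, CFC.sqrt_mul_sqrt_self _ (CFC.sqrt_nonneg _)]
  have htr : (X * K).trace = ((Kᴴ * S)ᴴ * (W * S)).trace := by
    rw [← hWQ, ← hSS, hS, conjTranspose_mul, hS, conjTranspose_conjTranspose,
      ← Matrix.mul_assoc W, Matrix.mul_assoc (W * S), trace_mul_comm]
  have h := two_mul_re_trace_conjTranspose_mul_le (Kᴴ * S) (W * S)
  have hK' := hK.conjTranspose.re_trace_conjTranspose_mul_le S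
  have hW' := hW.re_trace_conjTranspose_mul_le S
  rw [hSS] at hK' hW'
  rw [htr, traceNormRect]
  linarith

lemma norm_trace_mul_le_traceNormRect (X : Matrix m n ℂ) {K : Matrix n m ℂ}
    (hK : IsPartialIsometry K) : ‖(X * K).trace‖ ≤ traceNormRect X := by
  set z := (X * K).trace
  set c := Complex.exp (z.arg * Complex.I)
  have hz : (‖z‖ : ℂ) * c = z := Complex.norm_mul_exp_arg_mul_I z
  have hc : ‖star c‖ = 1 := by rw [norm_star, Complex.norm_exp_ofReal_mul_I]
  have hcc : star c * c = 1 := by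
    rw [Complex.star_def, Complex.conj_mul', Complex.norm_exp_ofReal_mul_I]; norm_num
  have hrot : (X * (star c • K)).trace = ‖z‖ :=
    calc (X * (star c • K)).trace = star c * (‖z‖ * c) := by
          rw [Matrix.mul_smul, trace_smul, smul_eq_mul, hz]
      _ = ‖z‖ := by rw [mul_left_comm, hcc, mul_one]
  have h := re_trace_mul_le_traceNormRect X (hK.smul hc)
  rwa [hrot, Complex.ofReal_re] at h

variable [DecidableEq m]

lemma traceNormRect_conjTranspose_le (X : Matrix m n ℂ) :
    traceNormRect Xᴴ ≤ traceNormRect X := by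
  obtain ⟨K, hK, hXK⟩ := exists_isPartialIsometry_trace_mul_eq_traceNormRect Xᴴ
  have hstar : Xᴴ * K = (Kᴴ * X)ᴴ := by rw [conjTranspose_mul, conjTranspose_conjTranspose]
  calc traceNormRect Xᴴ ≤ ‖(Xᴴ * K).trace‖ := by
        rw [hXK, Complex.norm_real, Real.norm_eq_abs]; exact le_abs_self _
    _ = ‖(X * Kᴴ).trace‖ := by rw [hstar, trace_conjTranspose, norm_star, trace_mul_comm]
    _ ≤ traceNormRect X := norm_trace_mul_le_traceNormRect X hK.conjTranspose

lemma traceNormRect_conjTranspose (X : Matrix m n ℂ) : traceNormRect Xᴴ = traceNormRect X :=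
  le_antisymm (traceNormRect_conjTranspose_le X) <| by
    simpa only [conjTranspose_conjTranspose] using traceNormRect_conjTranspose_le Xᴴ

lemma traceNormRect_transpose_le (X : Matrix m n ℂ) :
    traceNormRect Xᵀ ≤ traceNormRect X := by
  obtain ⟨K, hK, hXK⟩ := exists_isPartialIsometry_trace_mul_eq_traceNormRect Xᵀ
  have htr : Xᵀ * K = (Kᵀ * X)ᵀ := by rw [transpose_mul, transpose_transpose]
  calc traceNormRect Xᵀ ≤ ‖(Xᵀ * K).trace‖ := by
        rw [hXK, Complex.norm_real, Real.norm_eq_abs]; exact le_abs_self _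
    _ = ‖(X * Kᵀ).trace‖ := by rw [htr, trace_transpose, trace_mul_comm]
    _ ≤ traceNormRect X := norm_trace_mul_le_traceNormRect X hK.transpose

lemma traceNormRect_transpose (X : Matrix m n ℂ) : traceNormRect Xᵀ = traceNormRect X :=
  le_antisymm (traceNormRect_transpose_le X) <| by
    simpa only [transpose_transpose] using traceNormRect_transpose_le Xᵀ

lemma traceNormRect_of_unique [Unique n] (X : Matrix n n ℂ) :
    traceNormRect X = ‖X default default‖ := by
  have h : Xᴴ * X = algebraMap NNReal _ (‖X default default‖₊ ^ 2) := by
    ext i j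
    rw [Subsingleton.elim i default, Subsingleton.elim j default, algebraMap_matrix_apply,
      if_pos rfl, mul_apply, Fintype.sum_unique, conjTranspose_apply, Complex.star_def,
      Complex.conj_mul', IsScalarTower.algebraMap_apply NNReal ℝ ℂ]
    simp
  rw [traceNormRect, h, CFC.sqrt_algebraMap, NNReal.sqrt_sq, algebraMap_eq_diagonal,
    trace_diagonal, Fintype.sum_unique, Pi.algebraMap_apply,
    IsScalarTower.algebraMap_apply NNReal ℝ ℂ]
  simp

theorem fidelity_mul_conjTranspose_self [DecidableEq p] (M : Matrix n m ℂ) (N : Matrix n p ℂ) :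
    fidelity (M * Mᴴ) (N * Nᴴ) = traceNormRect (Mᴴ * N) ^ 2 := by
  have hM := posSemidef_self_mul_conjTranspose M
  have hN := posSemidef_self_mul_conjTranspose N
  rw [fidelity, msqrt_eq_cfcSqrt hM, msqrt_eq_cfcSqrt hN, traceNorm_eq_traceNormRect]
  set P := CFC.sqrt (M * Mᴴ)
  set R := CFC.sqrt (N * Nᴴ)
  have hP : Pᴴ * P = Mᴴᴴ * Mᴴ := by
    rw [conjTranspose_cfcSqrt, CFC.sqrt_mul_sqrt_self _ hM.nonneg, conjTranspose_conjTranspose]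
  have hR : Rᴴ * R = Nᴴᴴ * Nᴴ := by
    rw [conjTranspose_cfcSqrt, CFC.sqrt_mul_sqrt_self _ hN.nonneg, conjTranspose_conjTranspose]
  suffices h : traceNormRect (P * R) = traceNormRect (Mᴴ * N) by rw [h]
  calc traceNormRect (P * R) = traceNormRect (Mᴴ * R) :=
        traceNormRect_mul_eq_of_conjTranspose_mul_self_eq hP R
    _ = traceNormRect (R * M) := by
        rw [← traceNormRect_conjTranspose, conjTranspose_mul, conjTranspose_conjTranspose,
          conjTranspose_cfcSqrt]
    _ = traceNormRect (Nᴴ * M) := traceNormRect_mul_eq_of_conjTranspose_mul_self_eq hR M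
    _ = traceNormRect (Mᴴ * N) := by
        rw [← traceNormRect_conjTranspose, conjTranspose_mul, conjTranspose_conjTranspose]

theorem fidelity_vecMulVec (w u : n → ℂ) :
    fidelity (vecMulVec w (star w)) (vecMulVec u (star u)) = ‖star w ⬝ᵥ u‖ ^ 2 := by
  simp only [vecMulVec_eq Unit, ← conjTranspose_replicateCol]
  rw [fidelity_mul_conjTranspose_self, traceNormRect_of_unique, conjTranspose_replicateCol,
    replicateRow_mul_replicateCol_apply]

end Matrix

lemma ptraceR_vecMulVec_vec {A B : Type*} [Fintype A] [Fintype B] (X : Matrix B A ℂ) :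
    ptraceR (vecMulVec (vec X) (star (vec X))) = Xᵀ * Xᵀᴴ := by
  ext a a'
  simp [ptraceR, vecMulVec_apply, mul_apply]

theorem uhlmann_isometry_form_general {A B C : Type*} [Fintype A] [Fintype B] [Fintype C]
    [DecidableEq A] [DecidableEq C]
    (ρAB : Matrix (A × B) (A × B) ℂ) (σAC : Matrix (A × C) (A × C) ℂ)
    (hρpure : IsPure ρAB) (hσpure : IsPure σAC) :
    IsGreatest
      {x : ℝ | ∃ V : Matrix C B ℂ, IsPartialIsometry V ∧
        x = fidelity (((1 : Matrix A A ℂ) ⊗ₖ V) * ρAB * ((1 : Matrix A A ℂ) ⊗ₖ V)ᴴ) σAC}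
      (fidelity (ptraceR ρAB) (ptraceR σAC)) := by
  obtain ⟨_, rfl⟩ := hρpure
  obtain ⟨_, rfl⟩ := hσpure
  obtain ⟨X, rfl⟩ := vec_bijective.surjective ‹A × B → ℂ›
  obtain ⟨Y, rfl⟩ := vec_bijective.surjective ‹A × C → ℂ›
  have hvalue (V : Matrix C B ℂ) :
      fidelity (((1 : Matrix A A ℂ) ⊗ₖ V) * vecMulVec (vec X) (star (vec X)) *
          ((1 : Matrix A A ℂ) ⊗ₖ V)ᴴ) (vecMulVec (vec Y) (star (vec Y))) =
        ‖(Y * Xᴴ * Vᴴ).trace‖ ^ 2 := by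
    rw [mul_vecMulVec, vecMulVec_mul, vecMul_conjTranspose, star_star, ← vec_mul_eq_mulVec,
      fidelity_vecMulVec, star_vec_dotProduct_vec, conjTranspose_mul, Matrix.mul_assoc,
      trace_mul_comm, Matrix.mul_assoc, trace_mul_comm]
  have htarget : Xᵀᴴ * Yᵀ = (Y * Xᴴ)ᵀ := by
    rw [transpose_mul, conjTranspose_transpose_eq_transpose_conjTranspose]
  rw [ptraceR_vecMulVec_vec, ptraceR_vecMulVec_vec, fidelity_mul_conjTranspose_self, htarget,
    traceNormRect_transpose]
  constructor
  · obtain ⟨K, hK, htr⟩ := exists_isPartialIsometry_trace_mul_eq_traceNormRect (Y * Xᴴ)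
    refine ⟨Kᴴ, hK.conjTranspose, ?_⟩
    rw [hvalue, conjTranspose_conjTranspose, htr, Complex.norm_real, Real.norm_eq_abs, sq_abs]
  · rintro x ⟨V, hV, rfl⟩
    rw [hvalue]
    exact pow_le_pow_left₀ (norm_nonneg _) (norm_trace_mul_le_traceNormRect _ hV.conjTranspose) 2

/-- Uhlmann's theorem (isometry form): the fidelity of the marginals of the purifications
`ρ_{AB}` and `σ_{AC}` equals the maximum of `F((1⊗V) ρ_{AB} (1⊗V)†, σ_{AC})` over partial
isometries `V : B → C`. -/
theorem uhlmann_isometry_form {A B C : Type*} [Fintype A] [Fintype B] [Fintype C]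
    [DecidableEq A] [DecidableEq B] [DecidableEq C]
    (hBC : Fintype.card B ≤ Fintype.card C)
    (ρAB : Matrix (A × B) (A × B) ℂ) (σAC : Matrix (A × C) (A × C) ℂ)
    (hρpure : IsPure ρAB) (hσpure : IsPure σAC) :
    IsGreatest
      {x : ℝ | ∃ V : Matrix C B ℂ, IsPartialIsometry V ∧
        x = fidelity (((1 : Matrix A A ℂ) ⊗ₖ V) * ρAB * ((1 : Matrix A A ℂ) ⊗ₖ V)ᴴ) σAC}
      (fidelity (ptraceR ρAB) (ptraceR σAC)) :=
  uhlmann_isometry_form_general ρAB σAC hρpure hσpure
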